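/- Let S be a quasi-order on X, a, b ∈ X^ω with injections f, g witnessing a S^inj b and b S^inj a. If n ∉ I^∞(a) then a_n and b_{f(n)} are E_S-equivalent (i.e., a_n S b_{f(n)} and b_{f(n)} S a_n). -/

import Mathlib

/-- The derived sets `I_α(a)`. -/
noncomputable def Iset {X : Type*} (S : X → X → Prop) (a : ℕ → X) (α : Ordinal) : Set ℕ :=
  Ordinal.limitRecOn α
    Set.univ
    (fun _ A => {n ∈ A | {m ∈ A | S (a n) (a m)}.Infinite})
    (fun o _ IH => ⋂ (β : Ordinal) (h : β < o), IH β h)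

/-!
Put `h = g ∘ f`, so that `a_m S a_{h m}` for every `m`, hence `a_m S a_{h^k m}` for every `k`.
If `n` is a periodic point of `h`, going once around its cycle gives `a_{h n} S a_n`, and then
`b_{f n} S a_{g (f n)} = a_{h n} S a_n`. Otherwise, since `h` is injective, the orbit of `n` is
infinite, and every point of it lies `S`-below infinitely many later points of the orbit. Such a
set survives every derivation step, so `n ∈ I^∞(a)`.
-/

open Function Set

section Iset

variable {X : Type*} (S : X → X → Prop) (a : ℕ → X)

theorem Iset_zero : Iset S a 0 = univ := by
  rw [Iset, Ordinal.limitRecOn_zero]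

theorem Iset_add_one (α : Ordinal) :
    Iset S a (α + 1) = {n ∈ Iset S a α | {m ∈ Iset S a α | S (a n) (a m)}.Infinite} := by
  rw [Iset, Ordinal.limitRecOn_add_one, ← Iset]

theorem Iset_limit {α : Ordinal} (hα : Order.IsSuccLimit α) :
    Iset S a α = ⋂ (β : Ordinal) (_ : β < α), Iset S a β := by
  rw [Iset, Ordinal.limitRecOn_limit _ _ _ _ hα]
  rfl

theorem subset_Iset_of_forall_infinite {O : Set ℕ}
    (hO : ∀ n ∈ O, {m ∈ O | S (a n) (a m)}.Infinite) (α : Ordinal) : O ⊆ Iset S a α := by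
  induction α using Ordinal.limitRecOn with
  | zero => simp [Iset_zero]
  | add_one β ih =>
    rw [Iset_add_one]
    exact fun n hn => ⟨ih hn, (hO n hn).mono fun m hm => ⟨ih hm.1, hm.2⟩⟩
  | limit β hβ ih =>
    rw [Iset_limit S a hβ]
    exact subset_iInter₂ ih

end Iset

section Orbit

variable {α : Type*} {f : α → α}

theorem Function.Injective.iterate_injective_of_notMem_periodicPts (hf : Injective f) {x : α}
    (hx : x ∉ periodicPts f) : Injective (f^[·] x) := by
  suffices ∀ i j, i < j → f^[i] x ≠ f^[j] x by
    intro i j hij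
    by_contra hne
    rcases Nat.lt_or_gt_of_ne hne with hlt | hlt
    exacts [this i j hlt hij, this j i hlt hij.symm]
  intro i j hij heq
  exact hx ⟨j - i, Nat.sub_pos_of_lt hij, iterate_cancel hf heq.symm⟩

variable {r : α → α → Prop}

theorem rel_iterate_of_rel_apply (hrefl : ∀ x, r x x) (htrans : ∀ x y z, r x y → r y z → r x z)
    (hstep : ∀ x, r x (f x)) (k : ℕ) (x : α) : r x (f^[k] x) := by
  induction k with
  | zero => exact hrefl x
  | succ k ih => exact htrans _ _ _ ih (by rw [iterate_succ_apply']; exact hstep _)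

theorem Function.IsPeriodicPt.rel_apply_self (hiter : ∀ k x, r x (f^[k] x)) {k : ℕ} {x : α}
    (hx : IsPeriodicPt f k x) (hk : 0 < k) : r (f x) x := by
  have := hiter (k - 1) (f x)
  rwa [← iterate_succ_apply, Nat.succ_eq_add_one, Nat.sub_add_cancel hk, hx.eq] at this

theorem infinite_setOf_rel_of_mem_orbit (hiter : ∀ k x, r x (f^[k] x)) {x : α}
    (hx : Injective (f^[·] x)) :
    ∀ y ∈ range (f^[·] x), {z ∈ range (f^[·] x) | r y z}.Infinite := by
  rintro _ ⟨i, rfl⟩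
  refine infinite_of_injective_forall_mem (f := fun j => f^[j + i] x)
    (fun j j' hjj' => by simpa using hx hjj') fun j => ⟨⟨j + i, rfl⟩, ?_⟩
  simpa only [iterate_add_apply] using hiter j (f^[i] x)

end Orbit

/-- If `f, g` witness `a S^inj b` and `b S^inj a` and `n ∉ I^∞(a)`, then
`a_n` and `b_{f(n)}` are `E_S`-equivalent. -/
theorem stmt_10 {X : Type*} (S : X → X → Prop)
    (hrefl : ∀ x, S x x) (htrans : ∀ x y z, S x y → S y z → S x z)
    (a b : ℕ → X) (f g : ℕ → ℕ)
    (hf : Function.Injective f) (hg : Function.Injective g)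
    (hfw : ∀ n, S (a n) (b (f n))) (hgw : ∀ n, S (b n) (a (g n)))
    (n : ℕ)
    (hn : n ∉ ⋂ (α : Ordinal) (_ : α < (Cardinal.aleph 1).ord), Iset S a α) :
    S (a n) (b (f n)) ∧ S (b (f n)) (a n) := by
  refine ⟨hfw n, ?_⟩
  have hiter : ∀ k m, S (a m) (a ((g ∘ f)^[k] m)) :=
    rel_iterate_of_rel_apply (r := fun m m' => S (a m) (a m')) (fun _ => hrefl _)
      (fun _ _ _ => htrans _ _ _) fun m => htrans _ _ _ (hfw m) (hgw (f m))
  by_cases hper : n ∈ periodicPts (g ∘ f)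
  · obtain ⟨k, hk, hkn⟩ := hper
    exact htrans _ _ _ (hgw (f n)) (IsPeriodicPt.rel_apply_self (r := fun m m' => S (a m) (a m')) hiter hkn hk)
  · have horbit := subset_Iset_of_forall_infinite S a <| infinite_setOf_rel_of_mem_orbit hiter <|
      (hg.comp hf).iterate_injective_of_notMem_periodicPts hper
    exact absurd (mem_iInter₂.2 fun α _ => horbit α ⟨0, rfl⟩) hn
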